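/- Let H be a hypergraph on n vertices without isolated vertices containing two non-adjacent vertices (i.e., two vertices with no common edge). Then the second smallest normalized Laplacian eigenvalue satisfies λ_{n-1}(H) ≤ 1. -/

import Mathlib

/-!
If `z` and `w` share no edge, then `L(H)` has `1` at positions `(z, z)` and `(w, w)` and `0`
at `(z, w)`, so its quadratic form equals `‖x‖²` on the plane spanned by `e_z` and `e_w`. That
plane contains a nonzero vector orthogonal to an eigenvector of the smallest eigenvalue, and
expanding this vector in an orthonormal eigenbasis shows that some other eigenvalue is at most `1`.
-/

open Finset

variable {n : ℕ}

def hdeg (E : Finset (Finset (Fin n))) (v : Fin n) : ℕ :=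
  (E.filter fun e => v ∈ e).card

def codeg (E : Finset (Finset (Fin n))) (u v : Fin n) : ℕ :=
  (E.filter fun e => u ∈ e ∧ v ∈ e).card

noncomputable def adjMat (E : Finset (Finset (Fin n))) : Matrix (Fin n) (Fin n) ℝ :=
  fun u v => if u = v then 0
    else ∑ e ∈ E.filter (fun e => u ∈ e ∧ v ∈ e), (1 : ℝ) / ((e.card : ℝ) - 1)

noncomputable def lapMat (E : Finset (Finset (Fin n))) : Matrix (Fin n) (Fin n) ℝ :=
  Matrix.diagonal (fun v => (hdeg E v : ℝ)) - adjMat E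

noncomputable def normLap (E : Finset (Finset (Fin n))) : Matrix (Fin n) (Fin n) ℝ :=
  Matrix.diagonal (fun v => (hdeg E v : ℝ) ^ (-(1/2) : ℝ)) * lapMat E *
    Matrix.diagonal (fun v => (hdeg E v : ℝ) ^ (-(1/2) : ℝ))

noncomputable def eigsAsc (M : Matrix (Fin n) (Fin n) ℝ) : Fin n → ℝ :=
  if h : M.IsHermitian then (h.eigenvalues ∘ Tuple.sort h.eigenvalues) else 0

open Matrix WithLp

theorem Tuple.apply_sort_one_le {α : Type*} [LinearOrder α] (f : Fin n → α) (hn : 1 < n)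
    {c : α} (h : ∀ j, ∃ i ≠ j, f i ≤ c) : f (Tuple.sort f ⟨1, hn⟩) ≤ c := by
  obtain ⟨i, hi, hic⟩ := h (Tuple.sort f ⟨0, by omega⟩)
  have hi' : (Tuple.sort f).symm i ≠ ⟨0, by omega⟩ := by rwa [Ne, Equiv.symm_apply_eq]
  have hpos : (⟨1, hn⟩ : Fin n) ≤ (Tuple.sort f).symm i :=
    Fin.le_def.mpr (Nat.one_le_iff_ne_zero.mpr fun h0 => hi' (Fin.ext h0))
  calc f (Tuple.sort f ⟨1, hn⟩) ≤ f (Tuple.sort f ((Tuple.sort f).symm i)) :=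
        Tuple.monotone_sort f hpos
    _ = f i := by rw [Equiv.apply_symm_apply]
    _ ≤ c := hic

theorem OrthonormalBasis.dotProduct_self_eq_sum_repr_sq {ι : Type*} [Fintype ι]
    (b : OrthonormalBasis ι ℝ (EuclideanSpace ℝ ι)) (v : ι → ℝ) :
    v ⬝ᵥ v = ∑ i, b.repr (toLp 2 v) i ^ 2 := by
  calc v ⬝ᵥ v = inner ℝ (toLp 2 v) (toLp 2 v) := by
        rw [EuclideanSpace.inner_toLp_toLp, star_trivial]
    _ = ∑ i, inner ℝ (toLp 2 v) (b i) * inner ℝ (b i) (toLp 2 v) :=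
        (b.sum_inner_mul_inner _ _).symm
    _ = ∑ i, b.repr (toLp 2 v) i ^ 2 := by
        simp only [real_inner_comm (b _), ← b.repr_apply_apply, sq]

namespace Matrix.IsHermitian
variable {ι : Type*} [Fintype ι] [DecidableEq ι] {A : Matrix ι ι ℝ}

theorem eigenvectorBasis_repr_mulVec (hA : A.IsHermitian) (v : ι → ℝ) (i : ι) :
    hA.eigenvectorBasis.repr (toLp 2 (A *ᵥ v)) i =
      hA.eigenvalues i * hA.eigenvectorBasis.repr (toLp 2 v) i := by
  have hAt : Aᵀ = A := by simpa [conjTranspose_eq_transpose_of_trivial] using hA.eq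
  simp only [OrthonormalBasis.repr_apply_apply, EuclideanSpace.inner_eq_star_dotProduct,
    star_trivial]
  rw [dotProduct_comm, dotProduct_mulVec, ← mulVec_transpose, hAt,
    hA.mulVec_eigenvectorBasis, smul_dotProduct, smul_eq_mul, dotProduct_comm]

theorem dotProduct_mulVec_eq_sum_eigenvalues (hA : A.IsHermitian) (v : ι → ℝ) :
    v ⬝ᵥ (A *ᵥ v) = ∑ i, hA.eigenvalues i * hA.eigenvectorBasis.repr (toLp 2 v) i ^ 2 := by
  let b := hA.eigenvectorBasis
  calc v ⬝ᵥ (A *ᵥ v) = inner ℝ (toLp 2 (A *ᵥ v)) (toLp 2 v) := by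
        rw [EuclideanSpace.inner_toLp_toLp, star_trivial]
    _ = ∑ i, inner ℝ (toLp 2 (A *ᵥ v)) (b i) * inner ℝ (b i) (toLp 2 v) :=
        (b.sum_inner_mul_inner _ _).symm
    _ = ∑ i, hA.eigenvalues i * b.repr (toLp 2 v) i ^ 2 := by
        refine sum_congr rfl fun i _ => ?_
        rw [real_inner_comm, ← b.repr_apply_apply, ← b.repr_apply_apply,
          eigenvectorBasis_repr_mulVec]
        ring

theorem exists_ne_eigenvalues_le_of_dotProduct_mulVec_le (hA : A.IsHermitian) {c : ℝ} {j : ι}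
    {v : ι → ℝ} (hv : v ≠ 0) (hvj : hA.eigenvectorBasis.repr (toLp 2 v) j = 0)
    (hc : v ⬝ᵥ (A *ᵥ v) ≤ c * (v ⬝ᵥ v)) : ∃ i ≠ j, hA.eigenvalues i ≤ c := by
  by_contra! hlt
  set r := hA.eigenvectorBasis.repr (toLp 2 v)
  obtain ⟨k, hk⟩ : ∃ k, r k ≠ 0 := by
    by_contra! h0
    have : r = 0 := by ext k; simp [h0 k]
    simp_all [r]
  have hkj : k ≠ j := by rintro rfl; exact hk hvj
  rw [hA.dotProduct_mulVec_eq_sum_eigenvalues, hA.eigenvectorBasis.dotProduct_self_eq_sum_repr_sq,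
    mul_sum] at hc
  refine hc.not_gt (sum_lt_sum (fun i _ => ?_) ⟨k, mem_univ k, ?_⟩)
  · by_cases hij : i = j
    · simp [hij, r, hvj]
    · exact mul_le_mul_of_nonneg_right (hlt i hij).le (sq_nonneg _)
  · exact mul_lt_mul_of_pos_right (hlt k hkj) (by positivity)

theorem exists_ne_eigenvalues_le_of_linearIndependent (hA : A.IsHermitian) {c : ℝ}
    {x y : ι → ℝ} (hxy : LinearIndependent ℝ ![x, y])
    (hc : ∀ s t : ℝ, (s • x + t • y) ⬝ᵥ (A *ᵥ (s • x + t • y)) ≤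
      c * ((s • x + t • y) ⬝ᵥ (s • x + t • y))) (j : ι) :
    ∃ i ≠ j, hA.eigenvalues i ≤ c := by
  set r : (ι → ℝ) → ℝ := fun u => hA.eigenvectorBasis.repr (toLp 2 u) j
  obtain ⟨s, t, hst, hr⟩ : ∃ s t : ℝ, ¬(s = 0 ∧ t = 0) ∧ s * r x + t * r y = 0 := by
    by_cases h : r x = 0 ∧ r y = 0
    · exact ⟨1, 0, by simp, by simp [h.1]⟩
    · exact ⟨r y, -r x, fun h' => h ⟨by simpa using h'.2, h'.1⟩, by ring⟩
  refine hA.exists_ne_eigenvalues_le_of_dotProduct_mulVec_le (v := s • x + t • y)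
    (fun h => hst (LinearIndependent.pair_iff.mp hxy s t h)) ?_ (hc s t)
  simpa [r] using hr

theorem exists_ne_eigenvalues_le_of_apply_le (hA : A.IsHermitian) {c : ℝ} {z w : ι}
    (hzw : z ≠ w) (hz : A z z ≤ c) (hw : A w w ≤ c) (hzw₀ : A z w = 0) (j : ι) :
    ∃ i ≠ j, hA.eigenvalues i ≤ c := by
  have hwz₀ : A w z = 0 := by simpa [hzw₀] using (hA.apply z w)
  refine hA.exists_ne_eigenvalues_le_of_linearIndependent (x := Pi.single z 1)
    (y := Pi.single w 1) ?_ (fun s t => ?_) j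
  · refine LinearIndependent.pair_iff.mpr fun s t h => ⟨?_, ?_⟩
    · simpa [hzw] using congrFun h z
    · simpa [hzw.symm] using congrFun h w
  · simp only [mulVec_add, mulVec_smul, mulVec_single_one, dotProduct_add, add_dotProduct,
      dotProduct_smul, smul_dotProduct, single_dotProduct, dotProduct_single, col_apply,
      Pi.add_apply, Pi.smul_apply, Pi.single_eq_same, Pi.single_eq_of_ne hzw,
      Pi.single_eq_of_ne hzw.symm, hzw₀, hwz₀, smul_eq_mul]
    linarith [mul_le_mul_of_nonneg_left hz (mul_self_nonneg s),
      mul_le_mul_of_nonneg_left hw (mul_self_nonneg t)]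

end Matrix.IsHermitian

theorem adjMat_isHermitian (E : Finset (Finset (Fin n))) : (adjMat E).IsHermitian := by
  ext u v
  simp only [conjTranspose_apply, star_trivial, adjMat, eq_comm (a := v), and_comm (a := v ∈ _)]

theorem lapMat_isHermitian (E : Finset (Finset (Fin n))) : (lapMat E).IsHermitian :=
  (isHermitian_diagonal _).sub (adjMat_isHermitian E)

theorem normLap_isHermitian (E : Finset (Finset (Fin n))) : (normLap E).IsHermitian := by
  have h := isHermitian_conjTranspose_mul_mul
    (diagonal fun v => (hdeg E v : ℝ) ^ (-(1/2) : ℝ)) (lapMat_isHermitian E)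
  rwa [diagonal_conjTranspose, star_trivial] at h

theorem normLap_apply (E : Finset (Finset (Fin n))) (u v : Fin n) :
    normLap E u v =
      (hdeg E u : ℝ) ^ (-(1/2) : ℝ) * lapMat E u v * (hdeg E v : ℝ) ^ (-(1/2) : ℝ) := by
  rw [normLap, mul_diagonal, diagonal_mul]

theorem normLap_apply_self (E : Finset (Finset (Fin n))) {v : Fin n} (hv : 0 < hdeg E v) :
    normLap E v v = 1 := by
  have hd : (0 : ℝ) < hdeg E v := by exact_mod_cast hv
  have hsq : (hdeg E v : ℝ) ^ (-(1/2) : ℝ) * (hdeg E v : ℝ) ^ (-(1/2) : ℝ) =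
      (hdeg E v : ℝ)⁻¹ := by
    rw [← Real.rpow_add hd, ← Real.rpow_neg_one]
    norm_num
  rw [normLap_apply, lapMat, Matrix.sub_apply, diagonal_apply_eq, adjMat, if_pos rfl, sub_zero,
    mul_right_comm, hsq, inv_mul_cancel₀ hd.ne']

theorem normLap_apply_eq_zero (E : Finset (Finset (Fin n))) {u v : Fin n} (huv : u ≠ v)
    (h : ∀ e ∈ E, ¬(u ∈ e ∧ v ∈ e)) : normLap E u v = 0 := by
  rw [normLap_apply, lapMat, Matrix.sub_apply, diagonal_apply_ne _ huv, adjMat, if_neg huv,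
    filter_false_of_mem h, sum_empty]
  simp

theorem stmt14 (n : ℕ) (E : Finset (Finset (Fin n)))
    (hiso : ∀ v : Fin n, 0 < hdeg E v)
    (z w : Fin n) (hzw : z ≠ w) (hna : ∀ e ∈ E, ¬(z ∈ e ∧ w ∈ e)) :
    eigsAsc (normLap E) ⟨1, by
      have h2 : 1 < Fintype.card (Fin n) := Fintype.one_lt_card_iff.mpr ⟨z, w, hzw⟩
      simpa using h2⟩ ≤ 1 := by
  have hL := normLap_isHermitian E
  rw [eigsAsc, dif_pos hL]
  exact Tuple.apply_sort_one_le _ _ <| hL.exists_ne_eigenvalues_le_of_apply_le hzw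
    (normLap_apply_self E (hiso z)).le (normLap_apply_self E (hiso w)).le
    (normLap_apply_eq_zero E hzw hna)
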